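/- Let ζ ∈ [0,1), k₀ = √((1−ζ)/(1+ζ)), and Φ(ζ,k) = (i/2)(k−1/k)ζ + (i/2)(k+1/k). Then for every nonzero complex k, Re Φ(ζ,k) = −(Im k)(|k|² − k₀²)/(|k|²(1 + k₀²)). In particular Re Φ(ζ,k) = 0 if k is real or |k| = k₀, Re Φ < 0 if Im k > 0 and |k| > k₀ or if Im k < 0 and |k| < k₀, and Re Φ > 0 otherwise. -/

import Mathlib

open Complex

/-- The stationary point `k₀(ζ) = √((1−ζ)/(1+ζ))`. -/
noncomputable def kzero (ζ : ℝ) : ℝ := Real.sqrt ((1 - ζ) / (1 + ζ))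

/-- The sine-Gordon phase function `Φ(ζ,k) = (i/2)(k − 1/k)ζ + (i/2)(k + 1/k)`. -/
noncomputable def Phi (ζ : ℝ) (k : ℂ) : ℂ :=
  (Complex.I / 2) * (k - 1 / k) * (ζ : ℂ) + (Complex.I / 2) * (k + 1 / k)

/-!
Writing `Φ = (i/2)((1+ζ)k + (1−ζ)/k)` and using `Im (1/k) = −Im k/|k|²` gives
`Re Φ = −(Im k)((1+ζ)|k|² − (1−ζ))/(2|k|²)`; since `k₀² = (1−ζ)/(1+ζ)` and
`1 + k₀² = 2/(1+ζ)`, this is the stated formula. The sign of `Re Φ` is then the product of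
the signs of `−Im k` and `|k| − k₀`.
-/

section

variable {ζ : ℝ} {k : ℂ}

theorem kzero_nonneg (ζ : ℝ) : 0 ≤ kzero ζ := Real.sqrt_nonneg _

theorem kzero_sq (h₁ : -1 < ζ) (h₂ : ζ ≤ 1) : kzero ζ ^ 2 = (1 - ζ) / (1 + ζ) :=
  Real.sq_sqrt (div_nonneg (by linarith) (by linarith))

theorem Phi_re (ζ : ℝ) (k : ℂ) :
    (Phi ζ k).re = -k.im * ((1 + ζ) * ‖k‖ ^ 2 - (1 - ζ)) / (2 * ‖k‖ ^ 2) := by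
  rcases eq_or_ne k 0 with rfl | hk
  · simp [Phi]
  have hn : ‖k‖ ^ 2 ≠ 0 := by positivity
  simp only [Phi, add_re, mul_re, sub_re, div_re, one_re, one_im, I_re, I_im, ofReal_re,
    ofReal_im, div_im, mul_im, add_im, sub_im, normSq_eq_norm_sq, re_ofNat, im_ofNat, norm_ofNat]
  field_simp
  ring

theorem Phi_re_eq_kzero (h₁ : -1 < ζ) (h₂ : ζ ≤ 1) :
    (Phi ζ k).re = -k.im * (‖k‖ ^ 2 - kzero ζ ^ 2) / (‖k‖ ^ 2 * (1 + kzero ζ ^ 2)) := by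
  rw [Phi_re, kzero_sq h₁ h₂]
  have : 0 < 1 + ζ := by linarith
  field_simp
  ring

theorem Phi_re_neg (h₁ : -1 < ζ) (h₂ : ζ ≤ 1)
    (h : (0 < k.im ∧ kzero ζ < ‖k‖) ∨ (k.im < 0 ∧ ‖k‖ < kzero ζ)) : (Phi ζ k).re < 0 := by
  have hk : k ≠ 0 := by rintro rfl; simp at h
  rw [Phi_re_eq_kzero h₁ h₂]
  refine div_neg_of_neg_of_pos ?_ (by positivity)
  rcases h with ⟨him, hlt⟩ | ⟨him, hlt⟩
  · exact mul_neg_of_neg_of_pos (neg_neg_of_pos him)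
      (sub_pos.2 ((sq_lt_sq₀ (kzero_nonneg ζ) (norm_nonneg k)).2 hlt))
  · exact mul_neg_of_pos_of_neg (neg_pos.2 him)
      (sub_neg.2 ((sq_lt_sq₀ (norm_nonneg k) (kzero_nonneg ζ)).2 hlt))

theorem Phi_re_pos (h₁ : -1 < ζ) (h₂ : ζ ≤ 1)
    (h : (0 < k.im ∧ ‖k‖ < kzero ζ) ∨ (k.im < 0 ∧ kzero ζ < ‖k‖)) : 0 < (Phi ζ k).re := by
  have hk : k ≠ 0 := by rintro rfl; simp at h
  rw [Phi_re_eq_kzero h₁ h₂]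
  refine div_pos ?_ (by positivity)
  rcases h with ⟨him, hlt⟩ | ⟨him, hlt⟩
  · exact mul_pos_of_neg_of_neg (neg_neg_of_pos him)
      (sub_neg.2 ((sq_lt_sq₀ (norm_nonneg k) (kzero_nonneg ζ)).2 hlt))
  · exact mul_pos (neg_pos.2 him)
      (sub_pos.2 ((sq_lt_sq₀ (kzero_nonneg ζ) (norm_nonneg k)).2 hlt))

end

theorem stmt1_general (ζ : ℝ) (hζ : ζ ∈ Set.Ico (0 : ℝ) 1) (k : ℂ) :
    (Phi ζ k).re =
      -(k.im) * (‖k‖ ^ 2 - kzero ζ ^ 2) /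
        (‖k‖ ^ 2 * (1 + kzero ζ ^ 2)) ∧
    ((k.im = 0 ∨ ‖k‖ = kzero ζ) → (Phi ζ k).re = 0) ∧
    (((0 < k.im ∧ kzero ζ < ‖k‖) ∨ (k.im < 0 ∧ ‖k‖ < kzero ζ)) →
      (Phi ζ k).re < 0) ∧
    (((0 < k.im ∧ ‖k‖ < kzero ζ) ∨ (k.im < 0 ∧ kzero ζ < ‖k‖)) →
      0 < (Phi ζ k).re) := by
  have h₁ : -1 < ζ := by linarith [hζ.1]
  have h₂ : ζ ≤ 1 := hζ.2.le
  refine ⟨Phi_re_eq_kzero h₁ h₂, ?_, Phi_re_neg h₁ h₂, Phi_re_pos h₁ h₂⟩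
  rintro (h | h) <;> simp [Phi_re_eq_kzero h₁ h₂, h]

theorem stmt1 (ζ : ℝ) (hζ : ζ ∈ Set.Ico (0 : ℝ) 1) (k : ℂ) (hk : k ≠ 0) :
    (Phi ζ k).re =
      -(k.im) * (‖k‖ ^ 2 - kzero ζ ^ 2) /
        (‖k‖ ^ 2 * (1 + kzero ζ ^ 2)) ∧
    ((k.im = 0 ∨ ‖k‖ = kzero ζ) → (Phi ζ k).re = 0) ∧
    (((0 < k.im ∧ kzero ζ < ‖k‖) ∨ (k.im < 0 ∧ ‖k‖ < kzero ζ)) →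
      (Phi ζ k).re < 0) ∧
    (((0 < k.im ∧ ‖k‖ < kzero ζ) ∨ (k.im < 0 ∧ kzero ζ < ‖k‖)) →
      0 < (Phi ζ k).re) :=
  stmt1_general ζ hζ k
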